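/- arXiv:hep-th/0203128 — 2 statements merged into one kernel-verified Lean document; each statement's English description precedes it below -/
import Mathlib

section
/- As formal power series in x, x·∏_{n≥1} (1−x^{16n})/(1−x^{16n−8}) = ∑_{n∈ℤ} x^{(8n+1)²} + ∑_{n∈ℤ} x^{(8n+3)²}. -/
/-!
Put `q = X ^ 8`. Since `1 / (1 - q^(2n-1)) = (1 + q^(2n-1)) / (1 - q^(4n-2))` and the factors
`1 - q^(4n-2)` cancel half of `(q²; q²)_∞`, Gauss's product `∏ (1 - q^(2n)) / (1 - q^(2n-1))`
equals `(q⁴; q⁴)_∞ · (-q; q²)_∞`. By the Jacobi triple product with base `q⁴` this is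
`∑_{k ∈ ℤ} q^(k(2k+1))`, so `X` times the product is `∑_{k ∈ ℤ} X^((4k+1)²)`. Finally `4k + 1` is
`8n + 1` for even `k` and `-(8n + 3)` for odd `k`.

Everything is done with finite products, modulo powers of `X`. The triple product comes from the
q-binomial theorem for `∏_{i<2m} (X^(32m) + X^24 · X^(32i))`, together with
`(Q; Q)_m [2m, m+k]_Q ≡ 1 mod Q^(m-|k|+1)`.
-/

open PowerSeries Finset

section SModEq

variable {R : Type*} [CommRing R]

theorem one_sub_pow_smodEq_one (Q : R) {c e : ℕ} (h : c ≤ e) :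
    1 - Q ^ e ≡ 1 [SMOD Ideal.span {Q ^ c}] := by
  rw [SModEq.sub_mem, sub_sub_cancel_left, neg_mem_iff, Ideal.mem_span_singleton]
  exact pow_dvd_pow Q h

theorem SModEq.of_span_pow_le {Q a b : R} {c c' : ℕ} (h : a ≡ b [SMOD Ideal.span {Q ^ c}])
    (hc : c' ≤ c) : a ≡ b [SMOD Ideal.span {Q ^ c'}] :=
  h.mono (Ideal.span_singleton_le_span_singleton.mpr (pow_dvd_pow Q hc))

theorem SModEq.mul_pow {Q a b : R} {c : ℕ} (h : a ≡ b [SMOD Ideal.span {Q ^ c}]) (e : ℕ) :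
    a * Q ^ e ≡ b * Q ^ e [SMOD Ideal.span {Q ^ (c + e)}] := by
  rw [SModEq.sub_mem, Ideal.mem_span_singleton] at h ⊢
  rw [← sub_mul, pow_add]
  exact mul_dvd_mul_right h _

theorem prod_smodEq_one {ι : Type*} {I : Ideal R} {s : Finset ι} {f : ι → R}
    (h : ∀ i ∈ s, f i ≡ 1 [SMOD I]) : ∏ i ∈ s, f i ≡ 1 [SMOD I] := by
  simpa using SModEq.prod h

end SModEq

theorem prod_range_two_mul {M : Type*} [CommMonoid M] (f : ℕ → M) (m : ℕ) :
    ∏ n ∈ range (2 * m), f n = ∏ l ∈ range m, (f (2 * l) * f (2 * l + 1)) := by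
  induction m with
  | zero => simp
  | succ m ih => rw [mul_add_one, prod_range_succ, prod_range_succ, prod_range_succ, ih, mul_assoc]

section GaussianBinomial

variable {R : Type*}

def gaussBinom [CommSemiring R] (Q : R) : ℕ → ℕ → R
  | _, 0 => 1
  | 0, _ + 1 => 0
  | n + 1, k + 1 => gaussBinom Q n k + Q ^ (k + 1) * gaussBinom Q n (k + 1)

section CommSemiring

variable [CommSemiring R] (Q : R)

@[simp]
theorem gaussBinom_zero_right (n : ℕ) : gaussBinom Q n 0 = 1 := by
  cases n <;> rfl

theorem gaussBinom_succ_succ (n k : ℕ) :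
    gaussBinom Q (n + 1) (k + 1) = gaussBinom Q n k + Q ^ (k + 1) * gaussBinom Q n (k + 1) :=
  rfl

theorem gaussBinom_eq_zero_of_lt {n k : ℕ} (h : n < k) : gaussBinom Q n k = 0 := by
  induction n generalizing k with
  | zero => obtain ⟨k, rfl⟩ := Nat.exists_eq_add_one_of_ne_zero (by omega : k ≠ 0); rfl
  | succ n ih =>
    obtain ⟨k, rfl⟩ := Nat.exists_eq_add_one_of_ne_zero (by omega : k ≠ 0)
    rw [gaussBinom_succ_succ, ih (by omega), ih (by omega), mul_zero, add_zero]

/-- The q-binomial theorem, in homogeneous form. -/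
theorem prod_add_mul_pow_eq_sum_gaussBinom (a b : R) (n : ℕ) :
    ∏ j ∈ range n, (a + b * Q ^ j) =
      ∑ k ∈ range (n + 1), gaussBinom Q n k * Q ^ k.choose 2 * a ^ (n - k) * b ^ k := by
  induction n generalizing b with
  | zero => simp
  | succ n ih =>
    have hshift (j : ℕ) : a + b * Q ^ (j + 1) = a + b * Q * Q ^ j := by ring
    have hchoose (k : ℕ) : (k + 1).choose 2 = k.choose 2 + k := by
      rw [Nat.choose_succ_succ', Nat.choose_one_right, add_comm]
    have hb (k : ℕ) : gaussBinom Q n k * Q ^ k.choose 2 * a ^ (n - k) * (b * Q) ^ k * b =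
        gaussBinom Q n k * Q ^ (k + 1).choose 2 * a ^ (n + 1 - (k + 1)) * b ^ (k + 1) := by
      rw [hchoose, Nat.add_sub_add_right]
      ring
    have ha : ∀ k ∈ range n,
        gaussBinom Q n (k + 1) * Q ^ (k + 1).choose 2 * a ^ (n - (k + 1)) * (b * Q) ^ (k + 1) * a =
          Q ^ (k + 1) * gaussBinom Q n (k + 1) * Q ^ (k + 1).choose 2 * a ^ (n + 1 - (k + 1)) *
            b ^ (k + 1) := fun k hk => by
      rw [Nat.add_sub_add_right, show n - k = n - (k + 1) + 1 by grind, pow_succ]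
      ring
    -- split off the factor `a + b`; the remaining factors are those for `b * Q`
    rw [prod_range_succ', pow_zero, mul_one]
    simp_rw [hshift]
    rw [ih, mul_add, sum_mul, sum_mul, sum_range_succ' _ (n + 1)]
    simp only [gaussBinom_succ_succ, add_mul, sum_add_distrib, hb]
    rw [sum_range_succ' (fun k => _ * a), sum_congr rfl ha,
      sum_range_succ (fun k => Q ^ (k + 1) * _ * _ * _ * _),
      gaussBinom_eq_zero_of_lt Q n.lt_add_one]
    simp only [gaussBinom_zero_right, Nat.choose_zero_succ, Nat.sub_zero, pow_zero, mul_zero,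
      zero_mul, add_zero, pow_succ]
    ring

end CommSemiring

section CommRing

variable [CommRing R] (Q : R)

/-- `(Q; Q)_n` -/
def qPochhammer (n : ℕ) : R := ∏ i ∈ range n, (1 - Q ^ (i + 1))

theorem qPochhammer_succ (n : ℕ) :
    qPochhammer Q (n + 1) = qPochhammer Q n * (1 - Q ^ (n + 1)) :=
  prod_range_succ _ _

theorem gaussBinom_mul_qPochhammer_mul_qPochhammer {n k : ℕ} (h : k ≤ n) :
    gaussBinom Q n k * qPochhammer Q k * qPochhammer Q (n - k) = qPochhammer Q n := by
  induction n generalizing k with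
  | zero =>
    obtain rfl : k = 0 := by omega
    simp [qPochhammer]
  | succ n ih =>
    cases k with
    | zero => simp [qPochhammer]
    | succ k =>
      rw [gaussBinom_succ_succ, Nat.add_sub_add_right, qPochhammer_succ, qPochhammer_succ]
      rcases Nat.lt_or_ge k n with hk | hk
      · obtain ⟨d, hd⟩ : ∃ d, n - k = d + 1 := ⟨n - k - 1, by omega⟩
        have h1 := ih (k := k) (by omega)
        have h2 := ih (k := k + 1) (by omega)
        rw [hd, qPochhammer_succ] at h1
        rw [show n - (k + 1) = d by omega, qPochhammer_succ] at h2
        rw [hd, qPochhammer_succ, show n + 1 = (k + 1) + (d + 1) by omega, pow_add]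
        linear_combination (1 - Q ^ (k + 1)) * h1 + Q ^ (k + 1) * (1 - Q ^ (d + 1)) * h2
      · obtain rfl : n = k := by omega
        have h1 := ih le_rfl
        rw [Nat.sub_self] at h1
        rw [gaussBinom_eq_zero_of_lt Q n.lt_add_one, Nat.sub_self]
        linear_combination (1 - Q ^ (n + 1)) * h1

theorem qPochhammer_smodEq {c n : ℕ} (h : c ≤ n) :
    qPochhammer Q n ≡ qPochhammer Q c [SMOD Ideal.span {Q ^ (c + 1)}] := by
  obtain ⟨d, rfl⟩ := Nat.exists_eq_add_of_le h
  rw [qPochhammer, prod_range_add, ← qPochhammer]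
  simpa using SModEq.rfl.mul (prod_smodEq_one (s := range d) fun i _ =>
    one_sub_pow_smodEq_one Q (c := c + 1) (e := c + i + 1) (by omega))

theorem qPochhammer_mul_gaussBinom_smodEq_one {n k t : ℕ} (hk : k ≤ n) (ht : min k (n - k) ≤ t) :
    qPochhammer Q t * gaussBinom Q n k ≡ 1 [SMOD Ideal.span {Q ^ (min k (n - k) + 1)}] := by
  set c := min k (n - k)
  set π := Ideal.Quotient.mk (Ideal.span {Q ^ (c + 1)})
  have hred {i : ℕ} (hi : c ≤ i) : π (qPochhammer Q i) = π (qPochhammer Q c) :=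
    qPochhammer_smodEq Q hi
  have hunit : IsUnit (π (qPochhammer Q c)) := by
    have hQ : IsNilpotent (π Q) := ⟨c + 1, by
      rw [← map_pow, Ideal.Quotient.eq_zero_iff_mem]; exact Ideal.mem_span_singleton_self _⟩
    rw [qPochhammer, map_prod]
    exact IsUnit.prod_iff.mpr fun i _ => by
      rw [map_sub, map_one, map_pow]; exact (hQ.pow_succ i).isUnit_one_sub
  have hprod := congrArg π (gaussBinom_mul_qPochhammer_mul_qPochhammer Q hk)
  rw [map_mul, map_mul, hred (min_le_left _ _), hred (min_le_right _ _), hred (i := n) (by omega)]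
    at hprod
  rw [SModEq.idealQuotientMk, map_mul, map_one, hred ht]
  exact hunit.mul_left_cancel (by linear_combination hprod)

end CommRing

end GaussianBinomial

section PowerSeries

variable {R : Type*} [CommRing R]

theorem coeff_eq_of_smodEq {φ ψ : R⟦X⟧} {c n : ℕ} (h : φ ≡ ψ [SMOD Ideal.span {X ^ c}])
    (hn : n < c) : coeff n φ = coeff n ψ := by
  rw [SModEq.sub_mem, Ideal.mem_span_singleton, X_pow_dvd_iff] at h
  simpa [sub_eq_zero] using h n hn

theorem coeff_sum_X_pow_eq_natCard {ι : Type*} (s : Finset ι) (g : ι → ℕ) {n : ℕ}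
    (hs : ∀ i, g i = n → i ∈ s) :
    coeff n (∑ i ∈ s, (X : R⟦X⟧) ^ g i) = Nat.card {i // g i = n} := by
  simp_rw [map_sum, coeff_X_pow, sum_boole]
  rw [Nat.subtype_card {i ∈ s | n = g i} fun i =>
    ⟨fun h => (mem_filter.mp h).2.symm, fun h => mem_filter.mpr ⟨hs i h, h.symm⟩⟩]

theorem prod_X_pow_add_eq_X_pow_mul_prod (m : ℕ) :
    ∏ i ∈ range (2 * m), ((X : R⟦X⟧) ^ (32 * m) + X ^ 24 * (X ^ 32) ^ i) =
      X ^ (32 * m.choose 2 + 24 * m + 32 * m * m) *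
        ∏ n ∈ range (2 * m), (1 + X ^ (16 * n + 8)) := by
  have hlow : ∏ i ∈ range m, ((X : R⟦X⟧) ^ (32 * m) + X ^ 24 * (X ^ 32) ^ i) =
      X ^ (32 * m.choose 2 + 24 * m) * ∏ l ∈ range m, (1 + X ^ (32 * l + 8)) :=
    calc ∏ i ∈ range m, ((X : R⟦X⟧) ^ (32 * m) + X ^ 24 * (X ^ 32) ^ i)
        = ∏ i ∈ range m, (X ^ (32 * i + 24) * (1 + X ^ (32 * (m - 1 - i) + 8))) := by
          refine prod_congr rfl fun i hi => ?_
          rw [mul_add, mul_one, ← pow_add, ← pow_mul, ← pow_add, add_comm, add_comm 24,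
            show 32 * i + 24 + (32 * (m - 1 - i) + 8) = 32 * m by grind]
      _ = X ^ (32 * m.choose 2 + 24 * m) * ∏ l ∈ range m, (1 + X ^ (32 * l + 8)) := by
        rw [prod_mul_distrib, prod_pow_eq_pow_sum, sum_add_distrib, ← mul_sum, sum_range_id,
          ← Nat.choose_two_right, sum_const, card_range, smul_eq_mul, mul_comm m 24,
          prod_range_reflect (fun l => 1 + (X : R⟦X⟧) ^ (32 * l + 8))]
  have hhigh : ∏ l ∈ range m, ((X : R⟦X⟧) ^ (32 * m) + X ^ 24 * (X ^ 32) ^ (m + l)) =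
      X ^ (32 * m * m) * ∏ l ∈ range m, (1 + X ^ (32 * l + 24)) :=
    calc ∏ l ∈ range m, ((X : R⟦X⟧) ^ (32 * m) + X ^ 24 * (X ^ 32) ^ (m + l))
        = ∏ l ∈ range m, (X ^ (32 * m) * (1 + X ^ (32 * l + 24))) :=
          prod_congr rfl fun l _ => by ring
      _ = X ^ (32 * m * m) * ∏ l ∈ range m, (1 + X ^ (32 * l + 24)) := by
        rw [prod_mul_distrib, prod_const, card_range, ← pow_mul]
  have hpair : ∏ n ∈ range (2 * m), (1 + (X : R⟦X⟧) ^ (16 * n + 8)) =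
      (∏ l ∈ range m, (1 + X ^ (32 * l + 8))) * ∏ l ∈ range m, (1 + X ^ (32 * l + 24)) := by
    rw [prod_range_two_mul, ← prod_mul_distrib]
    exact prod_congr rfl fun l _ => by ring_nf
  rw [two_mul, prod_range_add, hlow, hhigh, ← two_mul, hpair]
  ring

/-- A finite Jacobi triple product. -/
theorem X_mul_prod_one_add_X_pow_eq_sum_gaussBinom (m : ℕ) :
    X * ∏ n ∈ range (2 * m), (1 + (X : R⟦X⟧) ^ (16 * n + 8)) =
      ∑ j ∈ Icc (-m : ℤ) m,
        gaussBinom (X ^ 32) (2 * m) (m + j).toNat * X ^ (4 * j + 1).natAbs ^ 2 := by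
  set E := 32 * m.choose 2 + 24 * m + 32 * m * m
  have hexp (k : ℕ) (hk : k ≤ 2 * m) : 32 * k.choose 2 + 32 * m * (2 * m - k) + 24 * k + 1 =
      E + (4 * ((k : ℤ) - m) + 1).natAbs ^ 2 := by
    rw [← Nat.cast_inj (R := ℚ)]
    push_cast [E, Nat.cast_sub hk, Nat.cast_choose_two, Nat.cast_natAbs, sq_abs]
    ring
  apply X_pow_mul_cancel (k := E)
  calc X ^ E * (X * ∏ n ∈ range (2 * m), (1 + (X : R⟦X⟧) ^ (16 * n + 8)))
      = X * ∏ i ∈ range (2 * m), ((X : R⟦X⟧) ^ (32 * m) + X ^ 24 * (X ^ 32) ^ i) := by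
        rw [prod_X_pow_add_eq_X_pow_mul_prod]
        ring
    _ = ∑ k ∈ range (2 * m + 1),
          gaussBinom (X ^ 32) (2 * m) k * X ^ (E + (4 * ((k : ℤ) - m) + 1).natAbs ^ 2) := by
        rw [prod_add_mul_pow_eq_sum_gaussBinom, mul_sum]
        refine sum_congr rfl fun k hk => ?_
        rw [← hexp k (Nat.lt_succ_iff.mp (mem_range.mp hk))]
        ring
    _ = X ^ E * ∑ j ∈ Icc (-m : ℤ) m,
          gaussBinom (X ^ 32) (2 * m) (m + j).toNat * X ^ (4 * j + 1).natAbs ^ 2 := by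
        rw [mul_sum]
        refine sum_nbij' (fun k => (k : ℤ) - m) (fun j => (m + j).toNat) ?_ ?_ ?_ ?_ ?_
        iterate 4 intro _ h; simp only [mem_range, mem_Icc] at h ⊢; omega
        intro k _
        rw [show ((m : ℤ) + (k - m)).toNat = k by omega, pow_add, mul_left_comm]

end PowerSeries

section GaussProduct

variable {K : Type*} [Field K]

theorem inv_one_sub_X_pow_smodEq_one {b : ℕ} (hb : b ≠ 0) :
    (1 - X ^ b : K⟦X⟧)⁻¹ ≡ 1 [SMOD Ideal.span {X ^ b}] := by
  have h := (SModEq.rfl (x := (1 - X ^ b : K⟦X⟧)⁻¹)).mul (one_sub_pow_smodEq_one X (le_refl b)).symm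
  rwa [mul_one, PowerSeries.inv_mul_cancel _ (by simp [hb])] at h

theorem inv_one_sub_X_pow {b : ℕ} (hb : b ≠ 0) :
    (1 - X ^ b : K⟦X⟧)⁻¹ = (1 + X ^ b) * (1 - X ^ (2 * b))⁻¹ := by
  rw [PowerSeries.inv_eq_iff_mul_eq_one (by simp [hb])]
  linear_combination PowerSeries.inv_mul_cancel (1 - X ^ (2 * b) : K⟦X⟧) (by simp [hb])

noncomputable def gaussProduct (M : ℕ) : K⟦X⟧ :=
  ∏ n ∈ range M, ((1 - X ^ (16 * (n + 1))) * (1 - X ^ (16 * (n + 1) - 8))⁻¹)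

theorem gaussProduct_add_smodEq (M d : ℕ) :
    gaussProduct (M + d) ≡ (gaussProduct M : K⟦X⟧) [SMOD Ideal.span {X ^ (16 * M + 8)}] := by
  have hfactor : ∀ i ∈ range d,
      (1 - X ^ (16 * (M + i + 1))) * (1 - X ^ (16 * (M + i + 1) - 8))⁻¹ ≡ (1 : K⟦X⟧)
        [SMOD Ideal.span {X ^ (16 * M + 8)}] := fun i _ => by
    have h1 := one_sub_pow_smodEq_one (X : K⟦X⟧) (c := 16 * (M + i) + 8) (e := 16 * (M + i + 1))
      (by omega)
    have h2 := inv_one_sub_X_pow_smodEq_one (K := K) (b := 16 * (M + i + 1) - 8) (by omega)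
    rw [show 16 * (M + i + 1) - 8 = 16 * (M + i) + 8 by omega] at h2 ⊢
    simpa using (h1.mul h2).of_span_pow_le (by omega)
  simpa [gaussProduct, prod_range_add] using SModEq.rfl.mul (prod_smodEq_one hfactor)

theorem gaussProduct_two_mul_smodEq (m : ℕ) :
    gaussProduct (2 * m) ≡
      qPochhammer (X ^ 32) m * ∏ n ∈ range (2 * m), (1 + (X : K⟦X⟧) ^ (16 * n + 8))
      [SMOD Ideal.span {X ^ (32 * m + 16)}] := by
  set G : K⟦X⟧ := ∏ n ∈ range (2 * m), (1 + X ^ (16 * n + 8))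
  set B : K⟦X⟧ := ∏ l ∈ range m, (1 - X ^ (32 * l + 16))
  set T : K⟦X⟧ := ∏ l ∈ range m, (1 - X ^ (32 * (m + l) + 16))⁻¹
  have hfactor (n : ℕ) : (1 - X ^ (16 * (n + 1))) * (1 - X ^ (16 * (n + 1) - 8))⁻¹ =
      (1 - X ^ (16 * n + 16)) * (1 + X ^ (16 * n + 8)) * (1 - (X : K⟦X⟧) ^ (32 * n + 16))⁻¹ := by
    rw [show 16 * (n + 1) - 8 = 16 * n + 8 by omega, inv_one_sub_X_pow (by omega),
      show 2 * (16 * n + 8) = 32 * n + 16 by ring, mul_add_one 16 n]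
    ring
  have hnum : ∏ n ∈ range (2 * m), (1 - (X : K⟦X⟧) ^ (16 * n + 16)) =
      B * qPochhammer (X ^ 32) m := by
    rw [prod_range_two_mul, qPochhammer, ← prod_mul_distrib]
    exact prod_congr rfl fun l _ => by ring_nf
  have hden : ∏ n ∈ range (2 * m), (1 - (X : K⟦X⟧) ^ (32 * n + 16))⁻¹ =
      (∏ l ∈ range m, (1 - X ^ (32 * l + 16))⁻¹) * T := by
    rw [two_mul, prod_range_add]
  have hB : B * ∏ l ∈ range m, (1 - (X : K⟦X⟧) ^ (32 * l + 16))⁻¹ = 1 := by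
    rw [← prod_mul_distrib]
    exact prod_eq_one fun l _ => PowerSeries.mul_inv_cancel _ (by simp)
  have hT : T ≡ 1 [SMOD Ideal.span {X ^ (32 * m + 16)}] := prod_smodEq_one fun l _ =>
    (inv_one_sub_X_pow_smodEq_one (K := K) (b := 32 * (m + l) + 16) (by omega)).of_span_pow_le
      (by omega)
  have hsplit : gaussProduct (2 * m) = qPochhammer (X ^ 32) m * G * T := by
    rw [gaussProduct, prod_congr rfl fun n _ => hfactor n, prod_mul_distrib, prod_mul_distrib,
      hnum, hden]
    linear_combination qPochhammer (X ^ 32) m * G * T * hB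
  rw [hsplit]
  simpa using SModEq.rfl.mul hT

theorem coeff_X_mul_gaussProduct (N : ℕ) :
    coeff N (X * gaussProduct (N + 1) : K⟦X⟧) =
      Nat.card {j : ℤ // (4 * j + 1).natAbs ^ 2 = N} := by
  set m := N + 1
  have hprod : X * gaussProduct m ≡
      X * (qPochhammer (X ^ 32) m * ∏ n ∈ range (2 * m), (1 + (X : K⟦X⟧) ^ (16 * n + 8)))
      [SMOD Ideal.span {X ^ m}] := by
    have h1 := (gaussProduct_add_smodEq (K := K) m m).symm.of_span_pow_le (c' := m) (by omega)
    have h2 := (gaussProduct_two_mul_smodEq (K := K) m).of_span_pow_le (c' := m) (by omega)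
    rw [← two_mul] at h1
    exact SModEq.rfl.mul (h1.trans h2)
  have hterm : ∀ j ∈ Icc (-m : ℤ) m, qPochhammer (X ^ 32) m *
      (gaussBinom (X ^ 32) (2 * m) (m + j).toNat * X ^ (4 * j + 1).natAbs ^ 2) ≡
      (X : K⟦X⟧) ^ (4 * j + 1).natAbs ^ 2 [SMOD Ideal.span {X ^ m}] := by
    intro j hj
    rw [mem_Icc] at hj
    have h := qPochhammer_mul_gaussBinom_smodEq_one ((X : K⟦X⟧) ^ 32) (n := 2 * m)
      (k := (m + j).toNat) (t := m) (by omega) (by omega)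
    rw [← pow_mul] at h
    have h' := h.mul_pow ((4 * j + 1).natAbs ^ 2)
    rw [one_mul, mul_assoc] at h'
    have := Nat.le_self_pow two_ne_zero (4 * j + 1).natAbs
    exact h'.of_span_pow_le (by omega)
  have hsum : X * gaussProduct m ≡ ∑ j ∈ Icc (-m : ℤ) m, (X : K⟦X⟧) ^ (4 * j + 1).natAbs ^ 2
      [SMOD Ideal.span {X ^ m}] := by
    refine hprod.trans ?_
    rw [mul_left_comm, X_mul_prod_one_add_X_pow_eq_sum_gaussBinom, mul_sum]
    exact SModEq.sum hterm
  rw [coeff_eq_of_smodEq hsum N.lt_add_one, coeff_sum_X_pow_eq_natCard]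
  intro j hj
  have := Nat.le_self_pow two_ne_zero (4 * j + 1).natAbs
  rw [mem_Icc]
  omega

end GaussProduct

def fourMulAddOneSqEquiv (N : ℕ) :
    {j : ℤ // (4 * j + 1).natAbs ^ 2 = N} ≃
      {n : ℤ // (8 * n + 1).natAbs ^ 2 = N} ⊕ {n : ℤ // (8 * n + 3).natAbs ^ 2 = N} where
  toFun := fun ⟨j, hj⟩ => if h : j % 2 = 0 then .inl ⟨j / 2, by rw [← hj]; congr 2; omega⟩
    else .inr ⟨-(j / 2) - 1, by rw [← hj, ← Int.natAbs_neg]; congr 2; omega⟩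
  invFun := Sum.elim (fun ⟨n, hn⟩ => ⟨2 * n, by rw [← hn]; congr 2; ring⟩)
    (fun ⟨n, hn⟩ => ⟨-2 * n - 1, by rw [← hn, ← Int.natAbs_neg (8 * n + 3)]; congr 2; ring⟩)
  left_inv := fun ⟨j, hj⟩ => by
    by_cases h : j % 2 = 0 <;> simp [h] <;> omega
  right_inv := by
    rintro (⟨n, hn⟩ | ⟨n, hn⟩)
    · simp
    · dsimp only [Sum.elim_inr]
      rw [dif_neg (by omega)]
      simp only [Sum.inr.injEq, Subtype.mk.injEq]
      omega

/-- As formal power series in `x`: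
`x·∏_{n≥1} (1−x^{16n})/(1−x^{16n−8}) = ∑_{n∈ℤ} x^{(8n+1)²} + ∑_{n∈ℤ} x^{(8n+3)²}`
(the identity `√2·χ_a = χ_+ + χ_−`), stated coefficient-wise via the stabilizing
partial products/sums. -/
theorem chi_a_splitting (N : ℕ) :
    PowerSeries.coeff (R := ℚ) N
      (PowerSeries.X *
        ∏ n ∈ Finset.range (N + 1),
          ((1 - (PowerSeries.X : PowerSeries ℚ) ^ (16 * (n + 1))) *
            (1 - (PowerSeries.X : PowerSeries ℚ) ^ (16 * (n + 1) - 8))⁻¹)) =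
    PowerSeries.coeff (R := ℚ) N
      ((∑ n ∈ Finset.Icc (-(N : ℤ)) (N : ℤ),
          (PowerSeries.X : PowerSeries ℚ) ^ ((8 * n + 1).natAbs ^ 2)) +
       ∑ n ∈ Finset.Icc (-(N : ℤ)) (N : ℤ),
          (PowerSeries.X : PowerSeries ℚ) ^ ((8 * n + 3).natAbs ^ 2)) := by
  have h1 (n : ℤ) (hn : (8 * n + 1).natAbs ^ 2 = N) : n ∈ Icc (-(N : ℤ)) N := by
    have := Nat.le_self_pow two_ne_zero (8 * n + 1).natAbs
    rw [mem_Icc]; omega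
  have h3 (n : ℤ) (hn : (8 * n + 3).natAbs ^ 2 = N) : n ∈ Icc (-(N : ℤ)) N := by
    have := Nat.le_self_pow two_ne_zero (8 * n + 3).natAbs
    rw [mem_Icc]; omega
  have : Finite {n : ℤ // (8 * n + 1).natAbs ^ 2 = N} :=
    ((Icc _ _).finite_toSet.subset h1).to_subtype
  have : Finite {n : ℤ // (8 * n + 3).natAbs ^ 2 = N} :=
    ((Icc _ _).finite_toSet.subset h3).to_subtype
  rw [← gaussProduct, coeff_X_mul_gaussProduct, map_add, coeff_sum_X_pow_eq_natCard _ _ h1,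
    coeff_sum_X_pow_eq_natCard _ _ h3, Nat.card_congr (fourMulAddOneSqEquiv N), Nat.card_sum,
    Nat.cast_add]
end

section
/- As formal power series in x, x·∏_{n≥1} (1−x^{16n})/(1+x^{16n−8}) = ∑_{n∈ℤ} x^{(8n+1)²} − ∑_{n∈ℤ} x^{(8n+3)²}. -/
/-!
With `y = x⁸`, `(1 - y^(2n)) / (1 + y^(2n-1)) = (1 - y^(2n)) (1 - y^(2n-1)) / (1 - y^(4n-2))`,
so the product is `x ∏ (1 - x^(32n)) (1 - x^(32n-8)) (1 - x^(32n-24))`. This is `x` times the Jacobi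
triple product `∏ (1 - q^(2n)) (1 + z q^(2n-1)) (1 + z⁻¹ q^(2n-1)) = ∑ₖ zᵏ q^(k²)` at `q = x¹⁶`,
`z = -x⁸`, whose `k`-th term times `x` is `(-1)ᵏ x^((4k+1)²)`; even `k = 2n` give `x^((8n+1)²)` and
odd `k = -2n-1` give `-x^((8n+3)²)`.

The triple product enters through its finite form
`∏_{j<m} (1 + z q^(2j+1)) (z + q^(2j+1)) = ∑ₖ [2m, k]_{q²} q^((k-m)²) zᵏ`, a rescaled instance of
the `q`-binomial theorem. Modulo `X^(N+1)` with `m = N + 1` the factor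
`[2m, k]_Q (Q; Q)_{2m} = (Q^(2m-k+1); Q)_k (Q^(k+1); Q)_{2m-k}`, `Q = x³²`, may be replaced by `1`:
it is `1` up to order `32 (min(k, 2m-k) + 1)`, which together with `x^((4(k-m)+1)²)` exceeds `N`.
-/

open PowerSeries Finset

section QBinomial

variable {A : Type*} [CommRing A]

def qBinomial (q : A) : ℕ → ℕ → A
  | _, 0 => 1
  | 0, _ + 1 => 0
  | n + 1, k + 1 => qBinomial q n (k + 1) + q ^ (n - k) * qBinomial q n k

@[simp] theorem qBinomial_zero_right (q : A) (n : ℕ) : qBinomial q n 0 = 1 := by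
  cases n <;> rfl

theorem qBinomial_succ_succ (q : A) (n k : ℕ) :
    qBinomial q (n + 1) (k + 1) = qBinomial q n (k + 1) + q ^ (n - k) * qBinomial q n k := rfl

theorem qBinomial_eq_zero_of_lt (q : A) {n k : ℕ} (h : n < k) : qBinomial q n k = 0 := by
  induction n generalizing k with
  | zero => obtain ⟨k, rfl⟩ := Nat.exists_eq_succ_of_ne_zero h.ne'; rfl
  | succ n ih =>
    obtain ⟨k, rfl⟩ := Nat.exists_eq_succ_of_ne_zero (Nat.ne_zero_of_lt h)
    rw [qBinomial_succ_succ, ih (by omega), ih (by omega), mul_zero, add_zero]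

theorem qBinomial_mul_prod_one_sub_pow (q : A) (n k : ℕ) :
    qBinomial q n k * ∏ i ∈ range k, (1 - q ^ (i + 1)) = ∏ i ∈ range k, (1 - q ^ (n - i)) := by
  induction n generalizing k with
  | zero =>
    cases k with
    | zero => simp
    | succ k => simp [qBinomial_eq_zero_of_lt, prod_range_succ']
  | succ n ih =>
    cases k with
    | zero => simp
    | succ k =>
      obtain hkn | hnk := le_or_gt k n
      · have hpow : q ^ (n - k) * q ^ (k + 1) = q ^ (n + 1) := by
          rw [← pow_add]; congr 1; omega
        rw [qBinomial_succ_succ, add_mul, ih, prod_range_succ _ k,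
          prod_range_succ (fun i => 1 - q ^ (i + 1)) k, prod_range_succ' _ k]
        simp only [Nat.add_sub_add_right, Nat.sub_zero]
        linear_combination q ^ (n - k) * (1 - q ^ (k + 1)) * ih k -
          (∏ i ∈ range k, (1 - q ^ (n - i))) * hpow
      · rw [qBinomial_eq_zero_of_lt q (by omega), zero_mul, eq_comm]
        exact prod_eq_zero (mem_range.2 (show n + 1 < k + 1 by omega)) (by simp)

theorem prod_add_pow_mul_eq_sum_qBinomial (q a b : A) (n : ℕ) :
    ∏ i ∈ range n, (a + q ^ i * b) =
      ∑ k ∈ range (n + 1), q ^ k.choose 2 * qBinomial q n k * a ^ (n - k) * b ^ k := by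
  induction n with
  | zero => simp
  | succ n ih =>
    have hlow :
        (∑ k ∈ range (n + 1), q ^ k.choose 2 * qBinomial q n k * a ^ (n - k) * b ^ k) * a =
          a ^ (n + 1) + ∑ k ∈ range (n + 1),
          q ^ (k + 1).choose 2 * qBinomial q n (k + 1) * a ^ (n - k) * b ^ (k + 1) := by
      rw [sum_range_succ' _ n, sum_range_succ _ n, qBinomial_eq_zero_of_lt q n.lt_succ_self,
        add_mul, sum_mul]
      simp only [Nat.choose_zero_succ, pow_zero, qBinomial_zero_right, Nat.sub_zero, mul_zero,
        zero_mul, add_zero]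
      have hterm : ∀ k ∈ range n,
          q ^ (k + 1).choose 2 * qBinomial q n (k + 1) * a ^ (n - (k + 1)) * b ^ (k + 1) * a =
            q ^ (k + 1).choose 2 * qBinomial q n (k + 1) * a ^ (n - k) * b ^ (k + 1) := by
        intro k hk
        rw [show n - k = n - (k + 1) + 1 by have := mem_range.1 hk; omega, pow_succ]
        ring
      rw [sum_congr rfl hterm]
      ring
    have hhigh :
        (∑ k ∈ range (n + 1), q ^ k.choose 2 * qBinomial q n k * a ^ (n - k) * b ^ k) *
          (q ^ n * b) = ∑ k ∈ range (n + 1),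
          q ^ (k + 1).choose 2 * (q ^ (n - k) * qBinomial q n k) * a ^ (n - k) * b ^ (k + 1) := by
      rw [sum_mul]
      refine sum_congr rfl fun k hk => ?_
      have hexp : (k + 1).choose 2 + (n - k) = k.choose 2 + n := by
        have hchoose : (k + 1).choose 2 = k + k.choose 2 := by
          rw [Nat.choose_succ_succ', Nat.choose_one_right]
        have := mem_range.1 hk
        omega
      rw [pow_succ b, ← mul_assoc (q ^ (k + 1).choose 2), ← pow_add, hexp, pow_add]
      ring
    rw [prod_range_succ, ih, mul_add, hlow, hhigh, sum_range_succ' _ (n + 1)]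
    simp only [qBinomial_succ_succ, Nat.choose_zero_succ, pow_zero, qBinomial_zero_right,
      Nat.sub_zero, mul_add, add_mul, sum_add_distrib, Nat.add_sub_add_right]
    ring

theorem prod_range_add_pow_eq_pow_mul_prod_jacobi (q z : A) {m : ℕ} (hm : 0 < m) :
    ∏ i ∈ range (2 * m), (q ^ (2 * m - 1) + (q ^ 2) ^ i * z) =
      q ^ (m * (m - 1) + m * (2 * m - 1)) *
        ∏ j ∈ range m, ((1 + q ^ (2 * j + 1) * z) * (z + q ^ (2 * j + 1))) := by
  have hlow : ∏ i ∈ range m, (q ^ (2 * m - 1) + (q ^ 2) ^ i * z) =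
      q ^ (m * (m - 1)) * ∏ j ∈ range m, (z + q ^ (2 * j + 1)) := by
    have hpow : ∏ j ∈ range m, (q ^ 2) ^ (m - 1 - j) = q ^ (m * (m - 1)) := by
      rw [prod_range_reflect (fun j => (q ^ 2) ^ j), prod_pow_eq_pow_sum, ← pow_mul, mul_comm 2,
        sum_range_id_mul_two]
    rw [← prod_range_reflect, ← hpow, ← prod_mul_distrib]
    refine prod_congr rfl fun j hj => ?_
    have hj := mem_range.1 hj
    rw [show 2 * m - 1 = 2 * (m - 1 - j) + (2 * j + 1) by omega, pow_add]
    ring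
  have hhigh : ∏ i ∈ range m, (q ^ (2 * m - 1) + (q ^ 2) ^ (m + i) * z) =
      q ^ (m * (2 * m - 1)) * ∏ j ∈ range m, (1 + q ^ (2 * j + 1) * z) := by
    rw [mul_comm m, pow_mul,
      show (q ^ (2 * m - 1)) ^ m = ∏ _i ∈ range m, q ^ (2 * m - 1) by simp, ← prod_mul_distrib]
    refine prod_congr rfl fun i _ => ?_
    rw [← pow_mul, show 2 * (m + i) = (2 * m - 1) + (2 * i + 1) by omega, pow_add]
    ring
  rw [two_mul, prod_range_add, ← two_mul, hlow, hhigh, prod_mul_distrib, pow_add]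
  ring

theorem jacobi_triple_product_finite {q : A} (hq : IsLeftRegular q) (z : A) (m : ℕ) :
    ∏ j ∈ range m, ((1 + q ^ (2 * j + 1) * z) * (z + q ^ (2 * j + 1))) =
      ∑ k ∈ range (2 * m + 1),
        qBinomial (q ^ 2) (2 * m) k * q ^ (((k : ℤ) - m).natAbs ^ 2) * z ^ k := by
  obtain rfl | hm := Nat.eq_zero_or_pos m
  · simp [qBinomial]
  refine hq.pow (m * (m - 1) + m * (2 * m - 1)) ?_
  dsimp only
  rw [← prod_range_add_pow_eq_pow_mul_prod_jacobi q z hm, prod_add_pow_mul_eq_sum_qBinomial,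
    mul_sum]
  refine sum_congr rfl fun k hk => ?_
  have hk : k ≤ 2 * m := by have := mem_range.1 hk; omega
  have hexp : 2 * k.choose 2 + (2 * m - 1) * (2 * m - k) =
      m * (m - 1) + m * (2 * m - 1) + ((k : ℤ) - m).natAbs ^ 2 := by
    have habs : ((((k : ℤ) - m).natAbs ^ 2 : ℕ) : ℚ) = ((k : ℚ) - m) ^ 2 := by
      rw [Nat.cast_pow, Nat.cast_natAbs, Int.cast_abs, sq_abs]; push_cast; ring
    rw [← Nat.cast_inj (R := ℚ), Nat.cast_add, Nat.cast_add, habs]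
    push_cast [Nat.cast_choose_two, Nat.cast_sub hk, Nat.cast_sub hm,
      Nat.cast_sub (show 1 ≤ 2 * m by omega)]
    ring
  calc _ = q ^ (2 * k.choose 2 + (2 * m - 1) * (2 * m - k)) *
        (qBinomial (q ^ 2) (2 * m) k * z ^ k) := by ring
    _ = _ := by rw [hexp, pow_add]; ring

end QBinomial

theorem Finset.prod_range_mul_eq_prod_prod {M : Type*} [CommMonoid M] (g : ℕ → M) (r m : ℕ) :
    ∏ i ∈ range (r * m), g i = ∏ j ∈ range m, ∏ i ∈ range r, g (r * j + i) := by
  induction m with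
  | zero => simp
  | succ m ih => rw [Nat.mul_succ, prod_range_add, ih, prod_range_succ]

theorem Int.natAbs_le_natAbs_four_mul_add_one_sq (k : ℤ) : k.natAbs ≤ (4 * k + 1).natAbs ^ 2 :=
  le_trans (by omega) (Nat.le_self_pow two_ne_zero _)

namespace PowerSeries

variable {R : Type*} [CommRing R]

noncomputable abbrev modXPow (n : ℕ) : R⟦X⟧ →+* R⟦X⟧ ⧸ Ideal.span {(X : R⟦X⟧) ^ n} :=
  Ideal.Quotient.mk _

theorem modXPow_eq_iff {n : ℕ} {f g : R⟦X⟧} : modXPow n f = modXPow n g ↔ X ^ n ∣ f - g :=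
  Ideal.Quotient.eq.trans Ideal.mem_span_singleton

theorem coeff_eq_of_modXPow_eq {n k : ℕ} {f g : R⟦X⟧} (h : modXPow n f = modXPow n g)
    (hk : k < n) : coeff k f = coeff k g := by
  rw [← sub_eq_zero, ← map_sub]
  exact X_pow_dvd_iff.1 (modXPow_eq_iff.1 h) k hk

theorem modXPow_X_pow {n e : ℕ} (h : n ≤ e) : modXPow n (X ^ e : R⟦X⟧) = 0 :=
  Ideal.Quotient.eq_zero_iff_mem.2 (Ideal.mem_span_singleton.2 (pow_dvd_pow X h))

theorem modXPow_prod_one_sub_X_pow {ι : Type*} {n : ℕ} (s : Finset ι) (e : ι → ℕ)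
    (h : ∀ i ∈ s, n ≤ e i) : modXPow n (∏ i ∈ s, (1 - X ^ e i) : R⟦X⟧) = 1 := by
  rw [map_prod]
  exact prod_eq_one fun i hi => by rw [map_sub, map_one, modXPow_X_pow (h i hi), sub_zero]

theorem modXPow_prod_range_one_sub_X_pow_of_le {n a b : ℕ} (e : ℕ → ℕ) (hab : a ≤ b)
    (h : ∀ i, a ≤ i → n ≤ e i) :
    modXPow n (∏ i ∈ range b, (1 - X ^ e i) : R⟦X⟧) =
      modXPow n (∏ i ∈ range a, (1 - X ^ e i) : R⟦X⟧) := by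
  obtain ⟨c, rfl⟩ := Nat.exists_eq_add_of_le hab
  rw [prod_range_add, map_mul,
    modXPow_prod_one_sub_X_pow (range c) (fun i => e (a + i)) fun i _ => h _ (by omega), mul_one]

theorem modXPow_X_pow_mul {n c e : ℕ} {f : R⟦X⟧} (hf : modXPow c f = 1) (h : n ≤ e + c) :
    modXPow n (X ^ e * f) = modXPow n (X ^ e) := by
  rw [← map_one (modXPow c), modXPow_eq_iff] at hf
  rw [modXPow_eq_iff, ← mul_sub_one]
  exact (pow_dvd_pow X h).trans (pow_add (X : R⟦X⟧) e c ▸ mul_dvd_mul_left _ hf)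

theorem modXPow_qBinomial_mul_prod {n c d j : ℕ} (hj : j ≤ n) (hc₁ : c ≤ d * (j + 1))
    (hc₂ : c ≤ d * (n - j + 1)) :
    modXPow c (qBinomial (X ^ d) n j * ∏ i ∈ range n, (1 - X ^ (d * (i + 1))) : R⟦X⟧) = 1 := by
  obtain ⟨l, rfl⟩ := Nat.exists_eq_add_of_le hj
  simp only [pow_mul]
  rw [prod_range_add, ← mul_assoc, qBinomial_mul_prod_one_sub_pow, map_mul]
  simp only [← pow_mul]
  rw [modXPow_prod_one_sub_X_pow _ _ fun i hi => hc₂.trans ?_,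
    modXPow_prod_one_sub_X_pow _ _ fun i hi => hc₁.trans ?_, one_mul]
  · exact Nat.mul_le_mul_left d (by omega)
  · have := mem_range.1 hi; exact Nat.mul_le_mul_left d (by omega)

theorem X_mul_prod_jacobi (m : ℕ) :
    X * ∏ j ∈ range m, ((1 - X ^ (32 * j + 8)) * (1 - X ^ (32 * j + 24)) : R⟦X⟧) =
      ∑ k ∈ range (2 * m + 1),
        (-1 : R⟦X⟧) ^ (m + k) * qBinomial (X ^ 32) (2 * m) k *
          X ^ (4 * ((k : ℤ) - m) + 1).natAbs ^ 2 := by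
  have hjac := jacobi_triple_product_finite (q := (X ^ 16 : R⟦X⟧)) X_pow_mul_injective (-X ^ 8) m
  have hfactor : ∀ j : ℕ,
      (1 + (X ^ 16) ^ (2 * j + 1) * -X ^ 8) * (-X ^ 8 + (X ^ 16) ^ (2 * j + 1)) =
      -X ^ 8 * ((1 - X ^ (32 * j + 8)) * (1 - X ^ (32 * j + 24)) : R⟦X⟧) := by
    intro j
    rw [← pow_mul, show 16 * (2 * j + 1) = (32 * j + 8) + 8 by ring,
      show 32 * j + 24 = (32 * j + 8) + 8 + 8 by ring]
    simp only [pow_add]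
    ring
  rw [prod_congr rfl fun j _ => hfactor j, prod_mul_distrib, prod_const, card_range] at hjac
  set J := ∏ j ∈ range m, ((1 - X ^ (32 * j + 8)) * (1 - X ^ (32 * j + 24)) : R⟦X⟧)
  have hsign : ((-1 : R⟦X⟧) ^ m) ^ 2 = 1 := by rw [← pow_mul, pow_mul', neg_one_sq, one_pow]
  -- `(-X⁸)ᵐ` in `hjac` is the normalising `zᵐ` of the finite triple product; cancel its `X^(8m)`.
  refine X_pow_mul_injective (k := 8 * m) ?_
  dsimp only
  have hJ : X ^ (8 * m) * (X * J) = (-1) ^ m * X * ((-X ^ 8) ^ m * J) := by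
    rw [neg_pow (X ^ 8 : R⟦X⟧), ← pow_mul]
    linear_combination (-(X ^ (8 * m) * (X * J))) * hsign
  rw [hJ, hjac, mul_sum, mul_sum]
  refine sum_congr rfl fun k _ => ?_
  have hX : (X : R⟦X⟧) ^ (8 * m) * X ^ (4 * ((k : ℤ) - m) + 1).natAbs ^ 2 =
      X * (X ^ 16) ^ ((k : ℤ) - m).natAbs ^ 2 * (X ^ 8) ^ k := by
    have hexp : 8 * m + (4 * ((k : ℤ) - m) + 1).natAbs ^ 2 =
        1 + 16 * ((k : ℤ) - m).natAbs ^ 2 + 8 * k := by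
      zify
      simp only [sq_abs]
      ring
    rw [← pow_add, hexp, ← pow_mul, ← pow_mul, pow_add, pow_add, pow_one]
  rw [← pow_mul, neg_pow (X ^ 8 : R⟦X⟧), pow_add (-1 : R⟦X⟧)]
  linear_combination (-((-1) ^ m * (-1) ^ k * qBinomial (X ^ (16 * 2)) (2 * m) k : R⟦X⟧)) * hX

theorem modXPow_X_mul_prod_jacobi_mul_prod (m : ℕ) :
    modXPow m (X * (∏ j ∈ range m, ((1 - X ^ (32 * j + 8)) * (1 - X ^ (32 * j + 24)))) *
        ∏ i ∈ range (2 * m), (1 - X ^ (32 * (i + 1))) : R⟦X⟧) =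
      modXPow m (∑ k ∈ range (2 * m + 1),
        (-1 : R⟦X⟧) ^ (m + k) * X ^ (4 * ((k : ℤ) - m) + 1).natAbs ^ 2) := by
  rw [X_mul_prod_jacobi, sum_mul, map_sum, map_sum]
  refine sum_congr rfl fun k hk => ?_
  have hk := mem_range.1 hk
  have hb := Int.natAbs_le_natAbs_four_mul_add_one_sq ((k : ℤ) - m)
  rw [show ∀ s b e p : R⟦X⟧, s * b * e * p = s * (e * (b * p)) by intros; ring, map_mul,
    modXPow_X_pow_mul (c := 32 * (m + 1 - ((k : ℤ) - m).natAbs))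
      (modXPow_qBinomial_mul_prod (by omega) (by omega) (by omega)) (by omega), ← map_mul]

theorem prod_range_four_mul_one_sub_X_pow (m : ℕ) :
    ∏ i ∈ range (4 * m), (1 - X ^ (8 * (i + 1)) : R⟦X⟧) =
      (∏ j ∈ range m, ((1 - X ^ (32 * j + 8)) * (1 - X ^ (32 * j + 24)))) *
        (∏ j ∈ range m, (1 - X ^ (32 * (j + 1)))) * ∏ j ∈ range m, (1 - X ^ (32 * j + 16)) := by
  rw [prod_range_mul_eq_prod_prod, ← prod_mul_distrib, ← prod_mul_distrib]
  refine prod_congr rfl fun j _ => ?_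
  simp only [prod_range_succ, prod_range_zero, one_mul]
  ring_nf

theorem inv_one_add_mul_one_sub_sq {K : Type*} [Field K] {φ : K⟦X⟧} (hφ : constantCoeff φ = 0) :
    (1 + φ)⁻¹ * (1 - φ ^ 2) = 1 - φ := by
  rw [show 1 - φ ^ 2 = (1 + φ) * (1 - φ) by ring, ← mul_assoc,
    PowerSeries.inv_mul_cancel _ (by simp [hφ]), one_mul]

theorem prod_one_sub_mul_inv_one_add_mul_prod {K : Type*} [Field K] (m : ℕ) :
    (∏ n ∈ range m, ((1 - X ^ (16 * (n + 1))) * (1 + X ^ (16 * (n + 1) - 8))⁻¹ : K⟦X⟧)) *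
      ∏ n ∈ range m, (1 - X ^ (32 * n + 16)) = ∏ i ∈ range (2 * m), (1 - X ^ (8 * (i + 1))) := by
  rw [← prod_mul_distrib, prod_range_mul_eq_prod_prod]
  refine prod_congr rfl fun n _ => ?_
  rw [show 16 * (n + 1) - 8 = 16 * n + 8 by omega, show 32 * n + 16 = (16 * n + 8) * 2 by ring,
    pow_mul (X : K⟦X⟧) (16 * n + 8) 2, mul_assoc, inv_one_add_mul_one_sub_sq (by simp)]
  simp only [prod_range_succ, prod_range_zero, one_mul]
  ring_nf

theorem modXPow_X_mul_prod_one_sub_X_pow (m : ℕ) :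
    modXPow m (X * ∏ i ∈ range (2 * m), (1 - X ^ (8 * (i + 1))) : R⟦X⟧) =
      modXPow m (∑ k ∈ range (2 * m + 1),
        (-1 : R⟦X⟧) ^ (m + k) * X ^ (4 * ((k : ℤ) - m) + 1).natAbs ^ 2) *
        modXPow m (∏ j ∈ range m, (1 - X ^ (32 * j + 16))) := by
  have h8 := modXPow_prod_range_one_sub_X_pow_of_le (R := R) (n := m) (fun i => 8 * (i + 1))
    (show 2 * m ≤ 4 * m by omega) fun i hi => by omega
  have h32 := modXPow_prod_range_one_sub_X_pow_of_le (R := R) (n := m) (fun i => 32 * (i + 1))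
    (show m ≤ 2 * m by omega) fun i hi => by omega
  rw [← modXPow_X_mul_prod_jacobi_mul_prod]
  simp only [map_mul] at h8 h32 ⊢
  rw [← h8, prod_range_four_mul_one_sub_X_pow, map_mul, map_mul, h32]
  ring

noncomputable def thetaTerm (k : ℤ) : R⟦X⟧ :=
  ((k.negOnePow : ℤ) : R⟦X⟧) * X ^ (4 * k + 1).natAbs ^ 2

theorem modXPow_thetaTerm {n : ℕ} {k : ℤ} (h : n ≤ k.natAbs) :
    modXPow n (thetaTerm k : R⟦X⟧) = 0 := by
  rw [thetaTerm, map_mul, modXPow_X_pow (h.trans (Int.natAbs_le_natAbs_four_mul_add_one_sq k)),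
    mul_zero]

theorem sum_range_eq_sum_Icc_thetaTerm (m : ℕ) :
    ∑ k ∈ range (2 * m + 1), (-1 : R⟦X⟧) ^ (m + k) * X ^ (4 * ((k : ℤ) - m) + 1).natAbs ^ 2 =
      ∑ k ∈ Icc (-(m : ℤ)) m, thetaTerm k := by
  refine sum_nbij' (fun k => (k : ℤ) - m) (fun k => (k + m).toNat) ?_ ?_ ?_ ?_ ?_
  · intro k hk; simp only [mem_range, mem_Icc] at hk ⊢; omega
  · intro k hk; simp only [mem_range, mem_Icc] at hk ⊢; omega
  · intro k _; simp
  · intro k hk; simp only [mem_Icc] at hk; omega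
  · intro k _
    rw [thetaTerm, Int.negOnePow_sub, ← Int.negOnePow_add, add_comm, ← Nat.cast_add,
      Int.cast_negOnePow_natCast]

theorem sum_sub_sum_eq_sum_thetaTerm (N : ℕ) :
    (∑ n ∈ Icc (-(N : ℤ)) N, (X : R⟦X⟧) ^ (8 * n + 1).natAbs ^ 2) -
        ∑ n ∈ Icc (-(N : ℤ)) N, (X : R⟦X⟧) ^ (8 * n + 3).natAbs ^ 2 =
      ∑ k ∈ (Icc (-(N : ℤ)) N).image (2 * ·) ∪
        (Icc (-(N : ℤ)) N).image (fun n => -(2 * n) - 1), thetaTerm k := by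
  rw [sum_union, sum_image (by intro a _ b _ h; simp only at h; omega),
    sum_image (by intro a _ b _ h; simp only at h; omega), sub_eq_add_neg, ← sum_neg_distrib]
  · congr 1 <;> refine sum_congr rfl fun n _ => ?_
    · rw [thetaTerm, Int.negOnePow_two_mul, show 4 * (2 * n) + 1 = 8 * n + 1 by ring]
      simp
    · rw [thetaTerm, Int.negOnePow_odd _ ⟨-n - 1, by ring⟩,
        show 4 * (-(2 * n) - 1) + 1 = -(8 * n + 3) by ring, Int.natAbs_neg]
      simp
  · rw [disjoint_left]
    simp only [mem_image]
    rintro _ ⟨a, _, rfl⟩ ⟨b, _, h⟩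
    omega

theorem modXPow_sum_sub_sum (N : ℕ) :
    modXPow (N + 1) ((∑ n ∈ Icc (-(N : ℤ)) N, (X : R⟦X⟧) ^ (8 * n + 1).natAbs ^ 2) -
        ∑ n ∈ Icc (-(N : ℤ)) N, (X : R⟦X⟧) ^ (8 * n + 3).natAbs ^ 2) =
      modXPow (N + 1) (∑ k ∈ Icc (-((N + 1 : ℕ) : ℤ)) (N + 1 : ℕ), thetaTerm k) := by
  have hvanish : ∀ k : ℤ, k ∉ Icc (-(N : ℤ)) N → modXPow (N + 1) (thetaTerm k : R⟦X⟧) = 0 :=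
    fun k hk => modXPow_thetaTerm (by rw [mem_Icc] at hk; omega)
  have hIcc : Icc (-(N : ℤ)) N ⊆ Icc (-((N + 1 : ℕ) : ℤ)) (N + 1 : ℕ) := by
    intro k hk; simp only [mem_Icc] at hk ⊢; omega
  have hS : Icc (-(N : ℤ)) N ⊆
      (Icc (-(N : ℤ)) N).image (2 * ·) ∪ (Icc (-(N : ℤ)) N).image (fun n => -(2 * n) - 1) := by
    intro k hk
    simp only [mem_union, mem_image, mem_Icc] at hk ⊢
    obtain ⟨c, rfl | rfl⟩ := Int.even_or_odd' k
    · exact Or.inl ⟨c, by omega, rfl⟩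
    · exact Or.inr ⟨-c - 1, by omega, by ring⟩
  rw [sum_sub_sum_eq_sum_thetaTerm, map_sum, map_sum,
    ← sum_subset hS fun k _ hk => hvanish k hk, ← sum_subset hIcc fun k _ hk => hvanish k hk]

end PowerSeries

/-- As formal power series in `x`:
`x·∏_{n≥1} (1−x^{16n})/(1+x^{16n−8}) = ∑_{n∈ℤ} x^{(8n+1)²} − ∑_{n∈ℤ} x^{(8n+3)²}`
(the identity `√2·χ_b = χ_+ − χ_−`), stated coefficient-wise via the stabilizing
partial products/sums. -/
theorem chi_b_splitting (N : ℕ) :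
    PowerSeries.coeff (R := ℚ) N
      (PowerSeries.X *
        ∏ n ∈ Finset.range (N + 1),
          ((1 - (PowerSeries.X : PowerSeries ℚ) ^ (16 * (n + 1))) *
            (1 + (PowerSeries.X : PowerSeries ℚ) ^ (16 * (n + 1) - 8))⁻¹)) =
    PowerSeries.coeff (R := ℚ) N
      ((∑ n ∈ Finset.Icc (-(N : ℤ)) (N : ℤ),
          (PowerSeries.X : PowerSeries ℚ) ^ ((8 * n + 1).natAbs ^ 2)) -
       ∑ n ∈ Finset.Icc (-(N : ℤ)) (N : ℤ),
          (PowerSeries.X : PowerSeries ℚ) ^ ((8 * n + 3).natAbs ^ 2)) := by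
  refine coeff_eq_of_modXPow_eq (n := N + 1) ?_ N.lt_succ_self
  have hD : IsUnit (modXPow (N + 1) (∏ n ∈ range (N + 1), (1 - X ^ (32 * n + 16)) : ℚ⟦X⟧)) :=
    (isUnit_iff_constantCoeff.2 (by simp [map_prod])).map _
  rw [← hD.mul_left_inj, ← map_mul, mul_assoc, prod_one_sub_mul_inv_one_add_mul_prod,
    modXPow_X_mul_prod_one_sub_X_pow, sum_range_eq_sum_Icc_thetaTerm, modXPow_sum_sub_sum]
end
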